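/- arXiv:2503.11595 — 11 statements merged into one kernel-verified Lean document; each statement's English description precedes it below -/
import Mathlib

section
/- Let L be a finite-dimensional ω-Lie algebra over a field of characteristic zero. The set QDer(L) of quasiderivations of L is a Lie subalgebra of gl(L): it contains 0, is closed under addition and scalar multiplication, and is closed under the commutator bracket. -/
variable {K L : Type*} [Field K] [CharZero K] [AddCommGroup L] [Module K L]
  [FiniteDimensional K L]

/-- compatibility of a linear map with the bilinear form. -/
def IsCompat (ω : L →ₗ[K] L →ₗ[K] K) (f : L →ₗ[K] L) : Prop :=
  ∀ x y, ω (f x) y + ω x (f y) = 0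

/-- `f` is a quasiderivation with associated map `f'`. -/
def IsQDerPair (br : L →ₗ[K] L →ₗ[K] L) (f f' : L →ₗ[K] L) : Prop :=
  ∀ x y, br (f x) y + br x (f y) = f' (br x y)

/-- `f` is a quasiderivation. -/
def IsQDer (br : L →ₗ[K] L →ₗ[K] L) (f : L →ₗ[K] L) : Prop :=
  ∃ f' : L →ₗ[K] L, IsQDerPair br f f'

/-- `f` is a generalized derivation. -/
def IsGDer (br : L →ₗ[K] L →ₗ[K] L) (f : L →ₗ[K] L) : Prop :=
  ∃ f₁ f₂ : L →ₗ[K] L, ∀ x y, br (f x) y = f₂ (br x y) - br x (f₁ y)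

/-- `f` lies in the quasicentroid. -/
def IsQCent (br : L →ₗ[K] L →ₗ[K] L) (f : L →ₗ[K] L) : Prop :=
  ∀ x y, br (f x) y = br x (f y)

theorem stmt3 (br : L →ₗ[K] L →ₗ[K] L) (ω : L →ₗ[K] L →ₗ[K] K)
    (hanti : ∀ x y, br x y = - br y x)
    (hskew : ∀ x y, ω x y = - ω y x)
    (hjac : ∀ x y z, br (br x y) z + br (br y z) x + br (br z x) y
      = ω x y • z + ω y z • x + ω z x • y) :
    IsQDer br (0 : L →ₗ[K] L) ∧
    (∀ f g : L →ₗ[K] L, IsQDer br f → IsQDer br g → IsQDer br (f + g)) ∧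
    (∀ (c : K) (f : L →ₗ[K] L), IsQDer br f → IsQDer br (c • f)) ∧
    (∀ f g : L →ₗ[K] L, IsQDer br f → IsQDer br g → IsQDer br (f ∘ₗ g - g ∘ₗ f)) := by
  refine ⟨⟨0, fun x y => by simp⟩, ?_, ?_, ?_⟩
  · rintro f g ⟨f', hf⟩ ⟨g', hg⟩
    refine ⟨f' + g', fun x y => ?_⟩
    simp only [LinearMap.add_apply, map_add, ← hf x y, ← hg x y]
    abel
  · rintro c f ⟨f', hf⟩
    exact ⟨c • f', fun x y => by simp [← hf x y, smul_add]⟩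
  · rintro f g ⟨f', hf⟩ ⟨g', hg⟩
    refine ⟨f' ∘ₗ g' - g' ∘ₗ f', fun x y => ?_⟩
    simp only [LinearMap.sub_apply, LinearMap.comp_apply, map_sub, ← hf x y, ← hg x y,
      map_add]
    rw [← hf (g x) y, ← hf x (g y), ← hg (f x) y, ← hg x (f y)]
    abel
end

section
/- Let L be a finite-dimensional ω-Lie algebra over a field of characteristic zero. The set GDer_c(L) of compatible generalized derivations of L is a Lie subalgebra of gl(L), i.e., it contains 0 and is closed under addition, scalar multiplication, and the commutator bracket. -/
variable {K L : Type*} [Field K] [CharZero K] [AddCommGroup L] [Module K L]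
  [FiniteDimensional K L]

theorem stmt4 (br : L →ₗ[K] L →ₗ[K] L) (ω : L →ₗ[K] L →ₗ[K] K)
    (hanti : ∀ x y, br x y = - br y x)
    (hskew : ∀ x y, ω x y = - ω y x)
    (hjac : ∀ x y z, br (br x y) z + br (br y z) x + br (br z x) y
      = ω x y • z + ω y z • x + ω z x • y) :
    (IsGDer br (0 : L →ₗ[K] L) ∧ IsCompat ω (0 : L →ₗ[K] L)) ∧
    (∀ f g : L →ₗ[K] L, IsGDer br f → IsCompat ω f → IsGDer br g → IsCompat ω g →
      IsGDer br (f + g) ∧ IsCompat ω (f + g)) ∧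
    (∀ (c : K) (f : L →ₗ[K] L), IsGDer br f → IsCompat ω f →
      IsGDer br (c • f) ∧ IsCompat ω (c • f)) ∧
    (∀ f g : L →ₗ[K] L, IsGDer br f → IsCompat ω f → IsGDer br g → IsCompat ω g →
      IsGDer br (f ∘ₗ g - g ∘ₗ f) ∧ IsCompat ω (f ∘ₗ g - g ∘ₗ f)) := by
  refine ⟨⟨⟨0, 0, by simp⟩, by intro x y; simp⟩, ?_, ?_, ?_⟩
  · rintro f g ⟨f₁, f₂, hf⟩ hcf ⟨g₁, g₂, hg⟩ hcg
    refine ⟨⟨f₁ + g₁, f₂ + g₂, fun x y => ?_⟩, fun x y => ?_⟩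
    · simp only [LinearMap.add_apply, map_add, hf x y, hg x y]
      abel
    · simp only [LinearMap.add_apply, map_add]
      linear_combination hcf x y + hcg x y
  · rintro c f ⟨f₁, f₂, hf⟩ hcf
    refine ⟨⟨c • f₁, c • f₂, fun x y => ?_⟩, fun x y => ?_⟩
    · simp only [LinearMap.smul_apply, map_smul, hf x y, smul_sub]
    · simp only [LinearMap.smul_apply, map_smul, smul_eq_mul]
      linear_combination c * hcf x y
  · rintro f g ⟨f₁, f₂, hf⟩ hcf ⟨g₁, g₂, hg⟩ hcg
    constructor
    · refine ⟨f₁ ∘ₗ g₁ - g₁ ∘ₗ f₁, f₂ ∘ₗ g₂ - g₂ ∘ₗ f₂, fun x y => ?_⟩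
      simp only [LinearMap.sub_apply, LinearMap.comp_apply, map_sub,
        hf (g x) y, hg x y, hg x (f₁ y), hg (f x) y, hf x y, hf x (g₁ y)]
      abel
    · intro x y
      have h1 : ω (f (g x)) y = ω x (g (f y)) := by
        have a := hcf (g x) y
        have b := hcg x (f y)
        linear_combination a - b
      have h2 : ω (g (f x)) y = ω x (f (g y)) := by
        have a := hcg (f x) y
        have b := hcf x (g y)
        linear_combination a - b
      simp only [LinearMap.sub_apply, LinearMap.comp_apply, map_sub]
      linear_combination h1 - h2
end

section
/- Let L be a finite-dimensional ω-Lie algebra with anticommutative bracket, and let f be a generalized derivation of L witnessed by (f₁, f₂). Set u = (f + f₁)/2 and v = (f − f₁)/2. Then u is a quasiderivation of L with associated map f₂ (i.e., [u(x),y] + [x,u(y)] = f₂([x,y]) for all x,y), and v lies in the quasicentroid of L (i.e., [v(x),y] = [x,v(y)] for all x,y). In particular f = u + v ∈ QDer(L) + QCent(L). -/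
variable {K L : Type*} [Field K] [CharZero K] [AddCommGroup L] [Module K L]
  [FiniteDimensional K L]

theorem stmt6 (br : L →ₗ[K] L →ₗ[K] L) (ω : L →ₗ[K] L →ₗ[K] K)
    (hanti : ∀ x y, br x y = - br y x)
    (hskew : ∀ x y, ω x y = - ω y x)
    (hjac : ∀ x y z, br (br x y) z + br (br y z) x + br (br z x) y
      = ω x y • z + ω y z • x + ω z x • y)
    (f f₁ f₂ : L →ₗ[K] L)
    (h : ∀ x y, br (f x) y = f₂ (br x y) - br x (f₁ y)) :
    IsQDerPair br ((2 : K)⁻¹ • (f + f₁)) f₂ ∧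
    IsQCent br ((2 : K)⁻¹ • (f - f₁)) ∧
    f = (2 : K)⁻¹ • (f + f₁) + (2 : K)⁻¹ • (f - f₁) := by
  have key : ∀ x y, br (f₁ x) y + br x (f y) = f₂ (br x y) := by
    intro x y
    have h2 := h y x
    rw [hanti (f y) x, hanti y (f₁ x), hanti y x, map_neg] at h2
    have h3 : br x (f y) = f₂ (br x y) - br (f₁ x) y := by
      rw [← neg_inj, h2]; abel
    rw [h3]; abel
  refine ⟨?_, ?_, ?_⟩
  · intro x y
    have h1 : br (f x) y + br x (f₁ y) = f₂ (br x y) := by rw [h x y]; abel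
    have h2 := key x y
    simp only [LinearMap.smul_apply, LinearMap.add_apply, map_add, map_smul,
      LinearMap.smul_apply, smul_add]
    calc (2:K)⁻¹ • br (f x) y + (2:K)⁻¹ • br (f₁ x) y
          + ((2:K)⁻¹ • br x (f y) + (2:K)⁻¹ • br x (f₁ y))
        = (2:K)⁻¹ • (br (f x) y + br x (f₁ y)) + (2:K)⁻¹ • (br (f₁ x) y + br x (f y)) := by
          rw [smul_add, smul_add]; abel
      _ = (2:K)⁻¹ • f₂ (br x y) + (2:K)⁻¹ • f₂ (br x y) := by rw [h1, h2]
      _ = f₂ (br x y) := by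
          rw [← smul_add, ← two_smul K, smul_smul, inv_mul_cancel₀ (two_ne_zero), one_smul]
  · intro x y
    have h1 := h x y
    have h2 := key x y
    have e : br (f x) y - br (f₁ x) y = br x (f y) - br x (f₁ y) := by
      rw [h1, show br (f₁ x) y = f₂ (br x y) - br x (f y) from by rw [← h2]; abel]
      abel
    simp only [LinearMap.smul_apply, LinearMap.sub_apply, map_sub, map_smul, smul_sub]
    rw [← smul_sub, ← smul_sub, e]
  · ext x
    simp only [LinearMap.add_apply, LinearMap.smul_apply, LinearMap.sub_apply]
    rw [smul_add, smul_sub]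
    have : (2:K)⁻¹ • f x + (2:K)⁻¹ • f x = f x := by
      rw [← two_smul K ((2:K)⁻¹ • f x), smul_smul, mul_inv_cancel₀ (two_ne_zero), one_smul]
    calc f x = (2:K)⁻¹ • f x + (2:K)⁻¹ • f x + ((2:K)⁻¹ • f₁ x - (2:K)⁻¹ • f₁ x) := by
          rw [this, sub_self, add_zero]
      _ = (2:K)⁻¹ • f x + (2:K)⁻¹ • f₁ x + ((2:K)⁻¹ • f x - (2:K)⁻¹ • f₁ x) := by abel
end

section
/- Let L be a finite-dimensional ω-Lie algebra over a field of characteristic zero. If every quasiderivation of L is compatible (QDer_c(L) = QDer(L)), or every element of the quasicentroid of L is compatible (QCent_c(L) = QCent(L)), then GDer_c(L) = QDer_c(L) + QCent_c(L). -/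
variable {K L : Type*} [Field K] [CharZero K] [AddCommGroup L] [Module K L]
  [FiniteDimensional K L]

theorem stmt7 (br : L →ₗ[K] L →ₗ[K] L) (ω : L →ₗ[K] L →ₗ[K] K)
    (hanti : ∀ x y, br x y = - br y x)
    (hskew : ∀ x y, ω x y = - ω y x)
    (hjac : ∀ x y z, br (br x y) z + br (br y z) x + br (br z x) y
      = ω x y • z + ω y z • x + ω z x • y)
    (hyp : (∀ f : L →ₗ[K] L, IsQDer br f → IsCompat ω f) ∨
           (∀ f : L →ₗ[K] L, IsQCent br f → IsCompat ω f)) :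
    ∀ f : L →ₗ[K] L, (IsGDer br f ∧ IsCompat ω f) ↔
      ∃ u v : L →ₗ[K] L, (IsQDer br u ∧ IsCompat ω u) ∧
        (IsQCent br v ∧ IsCompat ω v) ∧ f = u + v := by
  intro f
  constructor
  · rintro ⟨⟨f₁, f₂, h⟩, hc⟩
    set u : L →ₗ[K] L := (2⁻¹ : K) • (f + f₁) with hu
    set v : L →ₗ[K] L := (2⁻¹ : K) • (f - f₁) with hv
    have key : ∀ x y, br (f₁ x) y + br x (f y) = f₂ (br x y) := by
      intro x y
      have h1 := h y x
      rw [hanti (f y) x, hanti y x, hanti y (f₁ x)] at h1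
      simp only [map_neg, LinearMap.neg_apply] at h1
      linear_combination (norm := module) -h1
    have hfuv : f = u + v := by
      ext x
      simp only [hu, hv, LinearMap.add_apply, LinearMap.smul_apply, LinearMap.sub_apply]
      module
    have huq : IsQDerPair br u f₂ := by
      intro x y
      have h1 := h x y
      have h2 := key x y
      simp only [hu, LinearMap.smul_apply, LinearMap.add_apply, map_smul, map_add,
        LinearMap.smul_apply, LinearMap.add_apply]
      linear_combination (norm := module) (2⁻¹ : K) • h1 + (2⁻¹ : K) • h2
    have hvc : IsQCent br v := by
      intro x y
      have h1 := h x y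
      have h2 := key x y
      simp only [hv, LinearMap.smul_apply, LinearMap.sub_apply, map_smul, map_sub,
        LinearMap.smul_apply, LinearMap.sub_apply]
      linear_combination (norm := module) (2⁻¹ : K) • h1 - (2⁻¹ : K) • h2
    have hcompat_sub : ∀ g g' : L →ₗ[K] L, IsCompat ω g → IsCompat ω g' →
        IsCompat ω (g - g') := by
      intro g g' hg hg' x y
      have e1 := hg x y
      have e2 := hg' x y
      simp only [LinearMap.sub_apply, map_sub, LinearMap.sub_apply]
      linear_combination e1 - e2
    rcases hyp with hyp | hyp
    · have hcu : IsCompat ω u := hyp u ⟨f₂, huq⟩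
      have hcv : IsCompat ω v := by
        have : IsCompat ω (f - u) := hcompat_sub f u hc hcu
        have hv2 : v = f - u := by rw [hfuv]; abel
        rwa [hv2]
      exact ⟨u, v, ⟨⟨f₂, huq⟩, hcu⟩, ⟨hvc, hcv⟩, hfuv⟩
    · have hcv : IsCompat ω v := hyp v hvc
      have hcu : IsCompat ω u := by
        have : IsCompat ω (f - v) := hcompat_sub f v hc hcv
        have hu2 : u = f - v := by rw [hfuv]; abel
        rwa [hu2]
      exact ⟨u, v, ⟨⟨f₂, huq⟩, hcu⟩, ⟨hvc, hcv⟩, hfuv⟩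
  · rintro ⟨u, v, ⟨⟨u', hu'⟩, hcu⟩, ⟨hvq, hcv⟩, rfl⟩
    constructor
    · refine ⟨u - v, u', fun x y => ?_⟩
      have h1 := hu' x y
      have h2 := hvq x y
      simp only [LinearMap.add_apply, LinearMap.sub_apply, map_add, map_sub,
        LinearMap.add_apply, LinearMap.sub_apply]
      linear_combination (norm := module) h1 + h2
    · intro x y
      have h1 := hcu x y
      have h2 := hcv x y
      simp only [LinearMap.add_apply, map_add, LinearMap.add_apply]
      linear_combination h1 + h2
end

section
/- Let L be a finite-dimensional ω-Lie algebra, U a vector space complement of [L,L] in L, and L̃ = L·t + [L,L]·t² + U·t² the enlarged ω-Lie algebra with bracket [a·t,b·t] = [a,b]·t² (other products zero). For a quasiderivation f of L with associated map f′, define δ_U(f) : L̃ → L̃ by a·t + b·t² + u·t² ↦ f(a)·t + f′(b)·t², where a ∈ L, b ∈ [L,L], u ∈ U. Then δ_U(f) is a derivation of L̃: δ_U(f)([X,Y]) = [δ_U(f)(X), Y] + [X, δ_U(f)(Y)] for all X,Y ∈ L̃. -/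
theorem stmt9_general {K L : Type*} [Field K] [AddCommGroup L] [Module K L]
    (br : L →ₗ[K] L →ₗ[K] L)
    (D U : Submodule K L)
    (hD : D = Submodule.span K {z : L | ∃ x y, z = br x y})
    (hcompl : IsCompl D U)
    (f f' : L →ₗ[K] L)
    (hq : ∀ x y, br (f x) y + br x (f y) = f' (br x y)) :
    let π : L →ₗ[K] D := Submodule.linearProjOfIsCompl D U hcompl
    let δ : L × L → L × L := fun X => (f X.1, f' ((π X.2 : L)))
    let tbr : (L × L) → (L × L) → (L × L) := fun X Y => (0, br X.1 Y.1)
    ∀ X Y, δ (tbr X Y) = tbr (δ X) Y + tbr X (δ Y) := by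
  intro π δ tbr X Y
  have hmem : br X.1 Y.1 ∈ D := hD ▸ Submodule.subset_span ⟨X.1, Y.1, rfl⟩
  have hπ : (π (br X.1 Y.1) : L) = br X.1 Y.1 := Submodule.projection_apply_of_mem_left hcompl hmem
  refine Prod.ext ?_ ?_
  · simp [δ, tbr]
  · simp only [δ, tbr, Prod.snd_add, hπ, hq]

theorem stmt9 {K L : Type*} [Field K] [CharZero K] [AddCommGroup L] [Module K L]
    [FiniteDimensional K L]
    (br : L →ₗ[K] L →ₗ[K] L) (ω : L →ₗ[K] L →ₗ[K] K)
    (hanti : ∀ x y, br x y = - br y x)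
    (hskew : ∀ x y, ω x y = - ω y x)
    (hjac : ∀ x y z, br (br x y) z + br (br y z) x + br (br z x) y
      = ω x y • z + ω y z • x + ω z x • y)
    (D U : Submodule K L)
    (hD : D = Submodule.span K {z : L | ∃ x y, z = br x y})
    (hcompl : IsCompl D U)
    (f f' : L →ₗ[K] L)
    (hq : ∀ x y, br (f x) y + br x (f y) = f' (br x y)) :
    let π : L →ₗ[K] D := Submodule.linearProjOfIsCompl D U hcompl
    let δ : L × L → L × L := fun X => (f X.1, f' ((π X.2 : L)))
    let tbr : (L × L) → (L × L) → (L × L) := fun X Y => (0, br X.1 Y.1)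
    ∀ X Y, δ (tbr X Y) = tbr (δ X) Y + tbr X (δ Y) :=
  stmt9_general br D U hD hcompl f f' hq
end

section
/- The map δ_U : QDer(L) → Der(L̃) defined by δ_U(f)(a·t + b·t² + u·t²) = f(a)·t + f′(b)·t² is well-defined (independent of the choice of associated map f′), linear, injective, and a Lie algebra homomorphism: δ_U([f,g]) = [δ_U(f), δ_U(g)]. -/
variable {K L : Type*} [Field K] [CharZero K] [AddCommGroup L] [Module K L]
  [FiniteDimensional K L]

/-- The map `δ_U` on the model `L̃ = L × L` of `L·t ⊕ L·t²`, determined by a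
quasiderivation `f` together with a choice of associated map `f'`:
`a·t + b·t² + u·t² ↦ f(a)·t + f'(b)·t²`, where `b` is the projection onto
`D = [L,L]` along the complement `U`. -/
noncomputable def deltaU (D U : Submodule K L) (hcompl : IsCompl D U)
    (f f' : L →ₗ[K] L) : (L × L) →ₗ[K] (L × L) :=
  LinearMap.prod (f ∘ₗ LinearMap.fst K L L)
    ((f' ∘ₗ D.subtype ∘ₗ Submodule.linearProjOfIsCompl D U hcompl) ∘ₗ LinearMap.snd K L L)

/-!
The second component of `δ_U(f)` only sees `f'` on `[L,L]`, which is spanned by brackets, and on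
a bracket `f'` is determined by `f`. Moreover every associated map preserves `[L,L]`, so in the
composite `δ_U(f) ∘ δ_U(g)` the projection onto `[L,L]` applied after `g'` does nothing.
-/

def IsQuasiderivation {R M : Type*} [CommRing R] [AddCommGroup M] [Module R M]
    (br : M →ₗ[R] M →ₗ[R] M) (f f' : M →ₗ[R] M) : Prop :=
  ∀ x y, br (f x) y + br x (f y) = f' (br x y)

namespace IsQuasiderivation

variable {R M : Type*} [CommRing R] [AddCommGroup M] [Module R M]
  {br : M →ₗ[R] M →ₗ[R] M} {f f' f'' : M →ₗ[R] M}

theorem eqOn_span_brackets (hf' : IsQuasiderivation br f f')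
    (hf'' : IsQuasiderivation br f f'') :
    Set.EqOn f' f'' (Submodule.span R {z | ∃ x y, z = br x y}) := by
  refine fun d hd => LinearMap.eqOn_span ?_ hd
  rintro _ ⟨x, y, rfl⟩
  rw [← hf', hf'']

theorem mapsTo_span_brackets (hf : IsQuasiderivation br f f') :
    Set.MapsTo f' (Submodule.span R {z | ∃ x y, z = br x y})
      (Submodule.span R {z | ∃ x y, z = br x y}) := by
  refine fun d hd =>
    Submodule.mem_comap.1 ((Submodule.span_le (p := Submodule.comap f' _)).2 ?_ hd)
  rintro _ ⟨x, y, rfl⟩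
  rw [SetLike.mem_coe, Submodule.mem_comap, ← hf]
  exact add_mem (Submodule.subset_span ⟨_, _, rfl⟩) (Submodule.subset_span ⟨_, _, rfl⟩)

end IsQuasiderivation

section deltaU

variable {𝕜 V : Type*} [Field 𝕜] [AddCommGroup V] [Module 𝕜 V]
  {D U : Submodule 𝕜 V} (hcompl : IsCompl D U) {f f' g g' : V →ₗ[𝕜] V}

@[simp]
theorem deltaU_apply (p : V × V) :
    deltaU D U hcompl f f' p = (f p.1, f' (D.projection U hcompl p.2)) :=
  rfl

theorem deltaU_congr_right (h : Set.EqOn f' g' D) :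
    deltaU D U hcompl f f' = deltaU D U hcompl f g' :=
  LinearMap.ext fun p => by simp [h (D.projection_apply_mem hcompl p.2)]

theorem deltaU_add :
    deltaU D U hcompl (f + g) (f' + g') = deltaU D U hcompl f f' + deltaU D U hcompl g g' :=
  LinearMap.ext fun _ => by simp

theorem deltaU_sub :
    deltaU D U hcompl (f - g) (f' - g') = deltaU D U hcompl f f' - deltaU D U hcompl g g' :=
  LinearMap.ext fun _ => by simp

theorem deltaU_smul (c : 𝕜) :
    deltaU D U hcompl (c • f) (c • f') = c • deltaU D U hcompl f f' :=
  LinearMap.ext fun _ => by simp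

theorem eq_of_deltaU_eq (h : deltaU D U hcompl f f' = deltaU D U hcompl g g') : f = g :=
  LinearMap.ext fun x => congr_arg Prod.fst (LinearMap.congr_fun h (x, 0))

theorem deltaU_comp (hg' : Set.MapsTo g' D D) :
    deltaU D U hcompl f f' ∘ₗ deltaU D U hcompl g g' = deltaU D U hcompl (f ∘ₗ g) (f' ∘ₗ g') :=
  LinearMap.ext fun p => by
    simp [(D.projection_eq_self_iff hcompl _).2 (hg' (D.projection_apply_mem hcompl p.2))]

end deltaU

theorem stmt11_general (br : L →ₗ[K] L →ₗ[K] L)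
    (D U : Submodule K L)
    (hD : D = Submodule.span K {z : L | ∃ x y, z = br x y})
    (hcompl : IsCompl D U) :
    -- well-definedness: δ_U(f) does not depend on the choice of associated map
    (∀ f f' f'' : L →ₗ[K] L,
      (∀ x y, br (f x) y + br x (f y) = f' (br x y)) →
      (∀ x y, br (f x) y + br x (f y) = f'' (br x y)) →
      deltaU D U hcompl f f' = deltaU D U hcompl f f'') ∧
    -- linearity
    (∀ f f' g g' : L →ₗ[K] L,
      (∀ x y, br (f x) y + br x (f y) = f' (br x y)) →
      (∀ x y, br (g x) y + br x (g y) = g' (br x y)) →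
      deltaU D U hcompl (f + g) (f' + g') = deltaU D U hcompl f f' + deltaU D U hcompl g g') ∧
    (∀ (c : K) (f f' : L →ₗ[K] L),
      (∀ x y, br (f x) y + br x (f y) = f' (br x y)) →
      deltaU D U hcompl (c • f) (c • f') = c • deltaU D U hcompl f f') ∧
    -- injectivity
    (∀ f f' g g' : L →ₗ[K] L,
      (∀ x y, br (f x) y + br x (f y) = f' (br x y)) →
      (∀ x y, br (g x) y + br x (g y) = g' (br x y)) →
      deltaU D U hcompl f f' = deltaU D U hcompl g g' → f = g) ∧
    -- Lie algebra homomorphism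
    (∀ f f' g g' : L →ₗ[K] L,
      (∀ x y, br (f x) y + br x (f y) = f' (br x y)) →
      (∀ x y, br (g x) y + br x (g y) = g' (br x y)) →
      deltaU D U hcompl (f ∘ₗ g - g ∘ₗ f) (f' ∘ₗ g' - g' ∘ₗ f')
        = deltaU D U hcompl f f' ∘ₗ deltaU D U hcompl g g'
          - deltaU D U hcompl g g' ∘ₗ deltaU D U hcompl f f') := by
  subst hD
  refine ⟨fun f f' f'' hf' hf'' =>
      deltaU_congr_right hcompl (IsQuasiderivation.eqOn_span_brackets hf' hf''),
    fun f f' g g' _ _ => deltaU_add hcompl, fun c f f' _ => deltaU_smul hcompl c,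
    fun f f' g g' _ _ => eq_of_deltaU_eq hcompl, fun f f' g g' hf hg => ?_⟩
  rw [deltaU_sub, deltaU_comp hcompl (IsQuasiderivation.mapsTo_span_brackets hg),
    deltaU_comp hcompl (IsQuasiderivation.mapsTo_span_brackets hf)]

theorem stmt11 (br : L →ₗ[K] L →ₗ[K] L) (ω : L →ₗ[K] L →ₗ[K] K)
    (hanti : ∀ x y, br x y = - br y x)
    (hskew : ∀ x y, ω x y = - ω y x)
    (hjac : ∀ x y z, br (br x y) z + br (br y z) x + br (br z x) y
      = ω x y • z + ω y z • x + ω z x • y)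
    (D U : Submodule K L)
    (hD : D = Submodule.span K {z : L | ∃ x y, z = br x y})
    (hcompl : IsCompl D U) :
    -- well-definedness: δ_U(f) does not depend on the choice of associated map
    (∀ f f' f'' : L →ₗ[K] L,
      (∀ x y, br (f x) y + br x (f y) = f' (br x y)) →
      (∀ x y, br (f x) y + br x (f y) = f'' (br x y)) →
      deltaU D U hcompl f f' = deltaU D U hcompl f f'') ∧
    -- linearity
    (∀ f f' g g' : L →ₗ[K] L,
      (∀ x y, br (f x) y + br x (f y) = f' (br x y)) →
      (∀ x y, br (g x) y + br x (g y) = g' (br x y)) →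
      deltaU D U hcompl (f + g) (f' + g') = deltaU D U hcompl f f' + deltaU D U hcompl g g') ∧
    (∀ (c : K) (f f' : L →ₗ[K] L),
      (∀ x y, br (f x) y + br x (f y) = f' (br x y)) →
      deltaU D U hcompl (c • f) (c • f') = c • deltaU D U hcompl f f') ∧
    -- injectivity
    (∀ f f' g g' : L →ₗ[K] L,
      (∀ x y, br (f x) y + br x (f y) = f' (br x y)) →
      (∀ x y, br (g x) y + br x (g y) = g' (br x y)) →
      deltaU D U hcompl f f' = deltaU D U hcompl g g' → f = g) ∧
    -- Lie algebra homomorphism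
    (∀ f f' g g' : L →ₗ[K] L,
      (∀ x y, br (f x) y + br x (f y) = f' (br x y)) →
      (∀ x y, br (g x) y + br x (g y) = g' (br x y)) →
      deltaU D U hcompl (f ∘ₗ g - g ∘ₗ f) (f' ∘ₗ g' - g' ∘ₗ f')
        = deltaU D U hcompl f f' ∘ₗ deltaU D U hcompl g g'
          - deltaU D U hcompl g g' ∘ₗ deltaU D U hcompl f f') :=
  stmt11_general br D U hD hcompl
end

section
/- Let L be a finite-dimensional ω-Lie algebra of dimension at least 3 over a field of characteristic zero. If a ∈ L lies in the center c(L) (i.e., [a,y] = 0 for all y ∈ L) and a is part of a linearly independent triple, then ω(a,b) = 0 for all b ∈ L. Consequently, any linear map f on L with f(L) ⊆ c(L) is compatible: ω(f(x),y) + ω(x,f(y)) = 0 for all x,y ∈ L. -/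
theorem stmt12 {K L : Type*} [Field K] [CharZero K] [AddCommGroup L] [Module K L]
    [FiniteDimensional K L]
    (br : L →ₗ[K] L →ₗ[K] L) (ω : L →ₗ[K] L →ₗ[K] K)
    (hanti : ∀ x y, br x y = - br y x)
    (hskew : ∀ x y, ω x y = - ω y x)
    (hjac : ∀ x y z, br (br x y) z + br (br y z) x + br (br z x) y
      = ω x y • z + ω y z • x + ω z x • y)
    (hdim : 3 ≤ Module.finrank K L) :
    (∀ a : L, (∀ y, br a y = 0) →
      (∃ b c : L, LinearIndependent K ![a, b, c]) → ∀ b, ω a b = 0) ∧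
    (∀ f : L →ₗ[K] L, (∀ x y : L, br (f x) y = 0) →
      ∀ x y, ω (f x) y + ω x (f y) = 0) := by
  classical
  have key : ∀ a : L, (∀ y, br a y = 0) → ∀ b, ω a b = 0 := by
    intro a ha b
    -- find z outside span {a, b}
    have hlt : Submodule.span K ({a, b} : Set L) < ⊤ := by
      apply span_lt_top_of_card_lt_finrank
      calc ({a, b} : Set L).toFinset.card ≤ ({a} : Set L).toFinset.card + 1 := by
            rw [Set.toFinset_insert]
            exact Finset.card_insert_le _ _
        _ ≤ 2 := by simp
        _ < Module.finrank K L := by omega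
    obtain ⟨z, -, hz⟩ := SetLike.exists_of_lt hlt
    -- Jacobi at (a, b, z)
    have hj := hjac a b z
    have h1 : br a b = 0 := ha b
    have h2 : br (br b z) a = 0 := by rw [hanti]; rw [ha]; simp
    have h3 : br z a = 0 := by rw [hanti]; rw [ha]; simp
    rw [h1, h3] at hj
    simp only [map_zero, LinearMap.zero_apply, h2, add_zero, zero_add] at hj
    -- hj : 0 = ω a b • z + ω b z • a + ω z a • b
    by_contra hne
    apply hz
    have hzeq : z = (ω a b)⁻¹ • (-(ω b z • a) - (ω z a • b)) := by
      rw [eq_inv_smul_iff₀ hne]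
      have := hj.symm
      rw [add_assoc] at this
      rw [eq_neg_of_add_eq_zero_left this]
      abel
    rw [hzeq]
    apply Submodule.smul_mem
    apply Submodule.sub_mem
    · exact Submodule.neg_mem _ (Submodule.smul_mem _ _
        (Submodule.subset_span (Set.mem_insert a {b})))
    · exact Submodule.smul_mem _ _
        (Submodule.subset_span (Set.mem_insert_of_mem a rfl))
  constructor
  · intro a ha _ b
    exact key a ha b
  · intro f hf x y
    have h1 : ω (f x) y = 0 := key (f x) (hf x) y
    have h2 : ω (f y) x = 0 := key (f y) (hf y) x
    rw [h1, hskew x (f y), h2, neg_zero, add_zero]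
end

section
/- Let L be a finite-dimensional ω-Lie algebra with center c(L) = 0, and let L̃ be the enlarged ω-Lie algebra with complement U of [L,L]. Define ZDer(L̃) as the set of linear maps h on L̃ with h(L̃) ⊆ c(L̃) and h([L̃,L̃]) = 0. Then Der_c(L̃) = δ_U(QDer_c(L)) ⊕ ZDer(L̃), a direct sum of vector spaces, and ZDer(L̃) is an ideal of Der(L̃), so this is a semidirect sum decomposition of Lie algebras. -/
theorem stmt13 {K L : Type*} [Field K] [CharZero K] [AddCommGroup L] [Module K L]
    [FiniteDimensional K L]
    (br : L →ₗ[K] L →ₗ[K] L) (ω : L →ₗ[K] L →ₗ[K] K)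
    (hanti : ∀ x y, br x y = - br y x)
    (hskew : ∀ x y, ω x y = - ω y x)
    (hjac : ∀ x y z, br (br x y) z + br (br y z) x + br (br z x) y
      = ω x y • z + ω y z • x + ω z x • y)
    (hcenter : ∀ a : L, (∀ y, br a y = 0) → a = 0)
    (D U : Submodule K L)
    (hD : D = Submodule.span K {z : L | ∃ x y, z = br x y})
    (hcompl : IsCompl D U) :
    let π : L →ₗ[K] D := Submodule.linearProjOfIsCompl D U hcompl
    let tbr : (L × L) → (L × L) → (L × L) := fun X Y => (0, br X.1 Y.1)
    let tω : (L × L) → (L × L) → K := fun X Y => ω X.1 Y.1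
    let Der : Set ((L × L) →ₗ[K] (L × L)) :=
      {d | ∀ X Y, d (tbr X Y) = tbr (d X) Y + tbr X (d Y)}
    let DerC : Set ((L × L) →ₗ[K] (L × L)) :=
      {d | d ∈ Der ∧ ∀ X Y, tω (d X) Y + tω X (d Y) = 0}
    let ZDer : Set ((L × L) →ₗ[K] (L × L)) :=
      {h | (∀ X Y, tbr (h X) Y = 0) ∧ (∀ X Y, h (tbr X Y) = 0)}
    let Im : Set ((L × L) →ₗ[K] (L × L)) :=
      {d | ∃ f f' : L →ₗ[K] L,
        (∀ x y, br (f x) y + br x (f y) = f' (br x y)) ∧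
        (∀ x y, ω (f x) y + ω x (f y) = 0) ∧
        ∀ X : L × L, d X = (f X.1, f' ((π X.2 : L)))}
    -- Der_c(L̃) = δ_U(QDer_c(L)) ⊕ ZDer(L̃) as vector spaces
    (∀ d, d ∈ DerC ↔ ∃ g ∈ Im, ∃ h ∈ ZDer, d = g + h) ∧
    (∀ d, d ∈ Im → d ∈ ZDer → d = 0) ∧
    -- ZDer(L̃) is an ideal of Der(L̃)
    (∀ d h, d ∈ Der → h ∈ ZDer → (d ∘ₗ h - h ∘ₗ d) ∈ ZDer) := by
  intro π tbr tω Der DerC ZDer Im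
  simp only [Der, DerC, ZDer, Im, tbr, tω, Set.mem_setOf_eq]
  have hbrD : ∀ x y : L, br x y ∈ D := fun x y => by
    rw [hD]; exact Submodule.subset_span ⟨x, y, rfl⟩
  have hπbr : ∀ x y : L, ((π (br x y) : L)) = br x y := by
    intro x y
    have : π (br x y) = ⟨br x y, hbrD x y⟩ :=
      Submodule.linearProjOfIsCompl_apply_left hcompl ⟨br x y, hbrD x y⟩
    rw [this]
  refine ⟨?_, ?_, ?_⟩
  · intro d
    constructor
    · rintro ⟨hder, hcom⟩
      set f : L →ₗ[K] L := (LinearMap.fst K L L) ∘ₗ d ∘ₗ (LinearMap.inl K L L) with hf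
      set f' : L →ₗ[K] L := (LinearMap.snd K L L) ∘ₗ d ∘ₗ (LinearMap.inr K L L) with hf'
      have hfx : ∀ x : L, f x = (d (x, 0)).1 := fun x => rfl
      have hf'x : ∀ w : L, f' w = (d (0, w)).2 := fun w => rfl
      have hB : ∀ b : L, (d ((0 : L), b)).1 = 0 := by
        intro b
        apply hcenter
        intro y
        have h1 := hder ((0 : L), b) (y, (0 : L))
        have h2 : (((0 : L), br ((0:L), b).1 (y, (0:L)).1) : L × L) = (0 : L × L) := by simp
        rw [h2, map_zero] at h1
        have := congrArg Prod.snd h1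
        simpa using this.symm
      have hD1 : ∀ x y : L, d ((0 : L), br x y)
          = ((0 : L), br (f x) y + br x (f y)) := by
        intro x y
        have h1 := hder (x, (0 : L)) (y, (0 : L))
        rw [show (((0:L), br (x, (0:L)).1 (y, (0:L)).1) : L × L) = ((0:L), br x y) from rfl] at h1
        rw [h1, hfx x, hfx y]
        ext <;> simp
      have hq' : ∀ x y : L, br (f x) y + br x (f y) = f' (br x y) := by
        intro x y
        have := congrArg Prod.snd (hD1 x y)
        simp only at this
        rw [hf'x]
        exact this.symm
      refine ⟨LinearMap.prod (f ∘ₗ LinearMap.fst K L L)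
          (f' ∘ₗ D.subtype ∘ₗ π ∘ₗ LinearMap.snd K L L),
        ⟨f, f', hq', ?_, fun X => rfl⟩, d - LinearMap.prod (f ∘ₗ LinearMap.fst K L L)
          (f' ∘ₗ D.subtype ∘ₗ π ∘ₗ LinearMap.snd K L L), ⟨?_, ?_⟩, by abel⟩
      · intro x y
        have h1 := hcom (x, (0 : L)) (y, (0 : L))
        simpa [hfx] using h1
      · intro X Y
        have e2 : (d X).1 = f X.1 := by
          have hsplit : d X = d (X.1, (0:L)) + d ((0:L), X.2) := by
            rw [← map_add]; congr 1; ext <;> simp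
          rw [hsplit, Prod.fst_add, hB, add_zero, hfx]
        rw [show (((0:L), br ((d - LinearMap.prod (f ∘ₗ LinearMap.fst K L L)
            (f' ∘ₗ D.subtype ∘ₗ π ∘ₗ LinearMap.snd K L L)) X).1 Y.1) : L × L) =
            ((0:L), br ((d X).1 - f X.1) Y.1) from rfl, e2]
        simp
      · intro X Y
        have e1 : (d - LinearMap.prod (f ∘ₗ LinearMap.fst K L L)
            (f' ∘ₗ D.subtype ∘ₗ π ∘ₗ LinearMap.snd K L L)) ((0:L), br X.1 Y.1)
            = d ((0:L), br X.1 Y.1) - (f 0, f' (π (br X.1 Y.1) : L)) := rfl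
        rw [e1, hD1 X.1 Y.1, hπbr, map_zero, hq' X.1 Y.1, sub_self]
    · rintro ⟨g, ⟨f, f', hq, hc, hval⟩, h, ⟨hz1, hz2⟩, rfl⟩
      have hX1 : ∀ X : L × L, (h X).1 = 0 := by
        intro X
        apply hcenter
        intro y
        have := congrArg Prod.snd (hz1 X (y, 0))
        simpa using this
      constructor
      · intro X Y
        have l1 : (g + h) ((0:L), br X.1 Y.1) = g ((0:L), br X.1 Y.1) := by
          rw [LinearMap.add_apply, hz2 X Y, add_zero]
        have l2 : ((g + h) X).1 = f X.1 := by
          rw [LinearMap.add_apply, Prod.fst_add, hX1, add_zero, hval]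
        have l3 : ((g + h) Y).1 = f Y.1 := by
          rw [LinearMap.add_apply, Prod.fst_add, hX1, add_zero, hval]
        rw [l1, l2, l3, hval (((0:L), br X.1 Y.1) : L × L)]
        have : f' ((π ((((0:L), br X.1 Y.1) : L × L)).2 : L))
            = br (f X.1) Y.1 + br X.1 (f Y.1) := by
          rw [show ((((0:L), br X.1 Y.1) : L × L)).2 = br X.1 Y.1 from rfl, hπbr, ← hq]
        rw [show ((((0:L), br X.1 Y.1) : L × L)).1 = (0:L) from rfl, this, map_zero]
        ext <;> simp
      · intro X Y
        have l2 : ((g + h) X).1 = f X.1 := by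
          rw [LinearMap.add_apply, Prod.fst_add, hX1, add_zero, hval]
        have l3 : ((g + h) Y).1 = f Y.1 := by
          rw [LinearMap.add_apply, Prod.fst_add, hX1, add_zero, hval]
        rw [l2, l3, hc]
  · rintro d ⟨f, f', hq, hc, hval⟩ ⟨hz1, hz2⟩
    have hf0 : ∀ x : L, f x = 0 := by
      intro x
      apply hcenter
      intro y
      have h1 := hz1 (x, 0) (y, 0)
      rw [hval (x, 0)] at h1
      have := congrArg Prod.snd h1
      simpa using this
    have hfD : ∀ z ∈ D, f' z = 0 := by
      intro z hz
      rw [hD] at hz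
      induction hz using Submodule.span_induction with
      | mem w hw =>
        obtain ⟨x, y, rfl⟩ := hw
        rw [← hq x y, hf0, hf0]; simp
      | zero => simp
      | add a b _ _ ha hb => rw [map_add, ha, hb, add_zero]
      | smul c a _ ha => rw [map_smul, ha, smul_zero]
    apply LinearMap.ext
    intro X
    rw [hval X]
    have := hfD (π X.2) (π X.2).2
    simp [hf0, this]
  · rintro d h hd ⟨hz1, hz2⟩
    have hX1 : ∀ X : L × L, (h X).1 = 0 := by
      intro X
      apply hcenter
      intro y
      have := congrArg Prod.snd (hz1 X (y, 0))
      simpa using this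
    have hdh : ∀ X Y : L × L, (((0 : L), br (d (h X)).1 Y.1) : L × L) = 0 := by
      intro X Y
      have h1 := hd (h X) Y
      have h2 : (((0 : L), br (h X).1 Y.1) : L × L) = (0 : L × L) := by
        rw [hX1 X]; simp
      rw [h2, map_zero] at h1
      have h3 : (((0 : L), br (h X).1 (d Y).1) : L × L) = (0 : L × L) := by
        rw [hX1 X]; simp
      rw [h3, add_zero] at h1
      exact h1.symm
    constructor
    · intro X Y
      have e1 : ((d ∘ₗ h - h ∘ₗ d) X).1 = (d (h X)).1 - (h (d X)).1 := rfl
      rw [e1]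
      have a1 := congrArg Prod.snd (hdh X Y)
      have a2 := congrArg Prod.snd (hz1 (d X) Y)
      simp only at a1 a2
      rw [map_sub, LinearMap.sub_apply, a1, a2]
      simp
    · intro X Y
      have e1 : (d ∘ₗ h - h ∘ₗ d) ((0:L), br X.1 Y.1) =
          d (h ((0:L), br X.1 Y.1)) - h (d ((0:L), br X.1 Y.1)) := rfl
      rw [e1, hz2 X Y, map_zero, hd X Y, map_add, hz2 (d X) Y, hz2 X (d Y)]
      simp
end

section
/- Let L₁ be the 3-dimensional complex ω-Lie algebra with basis {x,y,z}, brackets [x,y]=y, [x,z]=0, [y,z]=z, and ω(x,y)=1, ω(x,z)=ω(y,z)=0. Then a linear map f on L₁ is a generalized derivation of L₁ if and only if its matrix in the basis {x,y,z} has the form with (2,1) entry and (2,3) entry equal to zero; in particular, GDer(L₁) is a 7-dimensional subspace of gl(L₁), hence GDer(L₁) ≠ gl(L₁). -/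
/-- Bracket of the ω-Lie algebra \`L₁\`: basis \`x = e 0, y = e 1, z = e 2\`,
\`[x,y] = y\`, \`[x,z] = 0\`, \`[y,z] = z\`, extended bilinearly. -/
def br1 (u v : Fin 3 → ℂ) : Fin 3 → ℂ :=
  ![0, u 0 * v 1 - u 1 * v 0, u 1 * v 2 - u 2 * v 1]

/-- The form ω of \`L₁\`: \`ω(x,y) = 1\`, \`ω(x,z) = ω(y,z) = 0\`, skew-symmetric bilinear. -/
def om1 (u v : Fin 3 → ℂ) : ℂ := u 0 * v 1 - u 1 * v 0

/-- \`f\` (as a matrix in the basis \`x,y,z\`) is a generalized derivation of \`L₁\`. -/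
def IsGDer1 (f : Matrix (Fin 3) (Fin 3) ℂ) : Prop :=
  ∃ f₁ f₂ : Matrix (Fin 3) (Fin 3) ℂ, ∀ u v : Fin 3 → ℂ,
    br1 (f.mulVec u) v = f₂.mulVec (br1 u v) - br1 u (f₁.mulVec v)

theorem IsGDer1.entries_eq_zero {f : Matrix (Fin 3) (Fin 3) ℂ} (hf : IsGDer1 f) :
    f 1 0 = 0 ∧ f 1 2 = 0 := by
  obtain ⟨f₁, f₂, h⟩ := hf
  -- On the pairs `(x, x)` and `(z, x)` the `y`-components give `f 1 0 = f₁ 1 0` and `f 1 2 = 0`,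
  -- and the `z`-component of `(z, x)` gives `f₁ 1 0 = 0`.
  have hxx := congr_fun (h ![1, 0, 0] ![1, 0, 0]) 1
  have hzx_y := congr_fun (h ![0, 0, 1] ![1, 0, 0]) 1
  have hzx_z := congr_fun (h ![0, 0, 1] ![1, 0, 0]) 2
  simp [br1, Matrix.mulVec, dotProduct, Fin.sum_univ_three] at hxx hzx_y hzx_z
  exact ⟨hxx.trans hzx_z.symm, hzx_y⟩

theorem isGDer1_of_entries_eq_zero {f : Matrix (Fin 3) (Fin 3) ℂ} (h10 : f 1 0 = 0)
    (h12 : f 1 2 = 0) : IsGDer1 f := by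
  -- Row `1` of `f` is `f 1 1 • e₁`, so `f₁ = f - f 1 1 • 1` kills `y`; `f₂` is then determined
  -- on the derived algebra `span {y, z}`, and set to zero on `x`.
  refine ⟨f - f 1 1 • 1, !![0, 0, 0; 0, f 0 0, -f 0 2; 0, -f 2 0, f 2 2], fun u v => ?_⟩
  funext i
  fin_cases i <;>
    simp [br1, Matrix.mulVec, dotProduct, Fin.sum_univ_three, h10, h12] <;>
    ring

theorem isGDer1_iff (f : Matrix (Fin 3) (Fin 3) ℂ) : IsGDer1 f ↔ f 1 0 = 0 ∧ f 1 2 = 0 :=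
  ⟨IsGDer1.entries_eq_zero, fun h => isGDer1_of_entries_eq_zero h.1 h.2⟩

namespace Matrix

variable {K m n : Type*} [Field K] [DecidableEq m] [DecidableEq n]

theorem surjective_entryLinearMap_prod {i i' : m} {j j' : n} (h : (i, j) ≠ (i', j')) :
    Function.Surjective ((entryLinearMap K K i j).prod (entryLinearMap K K i' j')) := by
  rintro ⟨a, b⟩
  refine ⟨single i j a + single i' j' b, ?_⟩
  simp only [Ne, Prod.mk.injEq] at h
  simp only [LinearMap.prod_apply, Function.prod_apply, entryLinearMap_apply, add_apply,
    single_apply]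
  grind

theorem finrank_ker_entryLinearMap_prod [Fintype m] [Fintype n] {i i' : m} {j j' : n}
    (h : (i, j) ≠ (i', j')) :
    Module.finrank K (LinearMap.ker ((entryLinearMap K K i j).prod (entryLinearMap K K i' j'))) =
      Fintype.card m * Fintype.card n - 2 := by
  have hrank := LinearMap.finrank_range_add_finrank_ker
    ((entryLinearMap K K i j).prod (entryLinearMap K K i' j'))
  rw [LinearMap.range_eq_top.mpr (surjective_entryLinearMap_prod h), finrank_top,
    Module.finrank_prod, Module.finrank_self, Module.finrank_matrix, Module.finrank_self] at hrank
  omega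

end Matrix

theorem stmt14 :
    (∀ f : Matrix (Fin 3) (Fin 3) ℂ, IsGDer1 f ↔ (f 1 0 = 0 ∧ f 1 2 = 0)) ∧
    (∃ S : Submodule ℂ (Matrix (Fin 3) (Fin 3) ℂ),
      (S : Set (Matrix (Fin 3) (Fin 3) ℂ)) = {f | IsGDer1 f} ∧ Module.finrank ℂ S = 7) ∧
    (∃ f : Matrix (Fin 3) (Fin 3) ℂ, ¬ IsGDer1 f) := by
  have hpos : ((1 : Fin 3), (0 : Fin 3)) ≠ (1, 2) := by decide
  refine ⟨isGDer1_iff, ⟨_, ?_, Matrix.finrank_ker_entryLinearMap_prod (K := ℂ) hpos⟩,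
    ⟨Matrix.single 1 0 1, by simp [isGDer1_iff]⟩⟩
  ext f
  simp [isGDer1_iff]
end

section
/- Let L₁ be the 3-dimensional complex ω-Lie algebra with basis {x,y,z}, brackets [x,y]=y, [x,z]=0, [y,z]=z, and ω(x,y)=1, ω(x,z)=ω(y,z)=0. Then the space GDer_c(L₁) of compatible generalized derivations of L₁ is 5-dimensional, consisting of all maps whose matrix has entries (2,1)=(2,3)=(1,3)=0 and (2,2) = −(1,1). In particular GDer_c(L₁) ≠ GDer(L₁). -/
/-- `f` is compatible with the form ω of `L₁`. -/
def IsCompat1 (f : Matrix (Fin 3) (Fin 3) ℂ) : Prop :=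
  ∀ u v : Fin 3 → ℂ, om1 (f.mulVec u) v + om1 u (f.mulVec v) = 0

section helper

open Matrix

lemma key (f : Matrix (Fin 3) (Fin 3) ℂ) : (IsGDer1 f ∧ IsCompat1 f) ↔
    (f 1 0 = 0 ∧ f 1 2 = 0 ∧ f 0 2 = 0 ∧ f 1 1 = - f 0 0) := by
  constructor
  · rintro ⟨⟨f₁, f₂, hg⟩, hc⟩
    have h10 : f 1 0 = 0 := by
      have := congrFun (hg ![1,0,0] ![0,0,1]) 2
      simpa [br1, Matrix.mulVec, dotProduct, Fin.sum_univ_three] using this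
    have h12 : f 1 2 = 0 := by
      have := hc ![1,0,0] ![0,0,1]
      simpa [om1, Matrix.mulVec, dotProduct, Fin.sum_univ_three] using this
    have h02 : f 0 2 = 0 := by
      have := hc ![0,1,0] ![0,0,1]
      have h' : -(f 0 2) = 0 := by
        simpa [om1, Matrix.mulVec, dotProduct, Fin.sum_univ_three] using this
      exact neg_eq_zero.mp h'
    have h11 : f 1 1 = - f 0 0 := by
      have := hc ![1,0,0] ![0,1,0]
      have h' : f 0 0 + f 1 1 = 0 := by
        simpa [om1, Matrix.mulVec, dotProduct, Fin.sum_univ_three] using this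
      linear_combination h'
    exact ⟨h10, h12, h02, h11⟩
  · rintro ⟨h10, h12, h02, h11⟩
    constructor
    · refine ⟨!![2 * f 0 0 - f 2 2, f 0 1, 0; 0, - f 2 2, 0; f 2 0, f 2 1, f 0 0],
        !![0, 0, 0; 0, f 0 0 - f 2 2, 0; 0, - f 2 0, 0], fun u v => ?_⟩
      funext i
      fin_cases i <;>
        simp [br1, Matrix.mulVec, dotProduct, Fin.sum_univ_three, h10, h12, h02, h11] <;>
        ring
    · intro u v
      simp only [om1, Matrix.mulVec, dotProduct, Fin.sum_univ_three, h10, h12, h02, h11]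
      ring

end helper

theorem stmt15 :
    (∀ f : Matrix (Fin 3) (Fin 3) ℂ, (IsGDer1 f ∧ IsCompat1 f) ↔
      (f 1 0 = 0 ∧ f 1 2 = 0 ∧ f 0 2 = 0 ∧ f 1 1 = - f 0 0)) ∧
    (∃ S : Submodule ℂ (Matrix (Fin 3) (Fin 3) ℂ),
      (S : Set (Matrix (Fin 3) (Fin 3) ℂ)) = {f | IsGDer1 f ∧ IsCompat1 f} ∧
      Module.finrank ℂ S = 5) ∧
    (∃ f : Matrix (Fin 3) (Fin 3) ℂ, IsGDer1 f ∧ ¬ IsCompat1 f) := by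
  refine ⟨fun f => key f, ?_, ?_⟩
  · -- the submodule
    let φ : (Fin 5 → ℂ) →ₗ[ℂ] Matrix (Fin 3) (Fin 3) ℂ :=
      { toFun := fun c => !![c 0, c 1, 0; 0, - c 0, 0; c 2, c 3, c 4]
        map_add' := by
          intro c d
          ext i j
          fin_cases i <;> fin_cases j <;> simp [Matrix.add_apply] <;> ring
        map_smul' := by
          intro r c
          ext i j
          fin_cases i <;> fin_cases j <;> simp [Matrix.smul_apply] <;> ring }
    have hφ : Function.Injective φ := by
      intro c d h
      funext i
      fin_cases i
      · exact congrFun (congrFun h 0) 0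
      · exact congrFun (congrFun h 0) 1
      · exact congrFun (congrFun h 2) 0
      · exact congrFun (congrFun h 2) 1
      · exact congrFun (congrFun h 2) 2
    refine ⟨LinearMap.range φ, ?_, ?_⟩
    · ext f
      simp only [SetLike.mem_coe, LinearMap.mem_range, Set.mem_setOf_eq, key]
      constructor
      · rintro ⟨c, rfl⟩
        refine ⟨?_, ?_, ?_, ?_⟩ <;> simp [φ]
      · rintro ⟨h10, h12, h02, h11⟩
        refine ⟨![f 0 0, f 0 1, f 2 0, f 2 1, f 2 2], ?_⟩
        ext i j
        fin_cases i <;> fin_cases j <;> simp [φ, h10, h12, h02, h11]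
    · rw [LinearMap.finrank_range_of_inj hφ]
      simp
  · -- identity is a GDer but not compatible
    refine ⟨1, ⟨0, 1, fun u v => ?_⟩, fun h => ?_⟩
    · funext i
      fin_cases i <;>
        simp [br1, Matrix.one_mulVec, Matrix.zero_mulVec, Matrix.mulVec,
          dotProduct, Fin.sum_univ_three]
    · have := h ![1,0,0] ![0,1,0]
      simp [om1, Matrix.one_mulVec] at this
end

section
/- Let L₁ be the 3-dimensional complex ω-Lie algebra with basis {x,y,z}, brackets [x,y]=y, [x,z]=0, [y,z]=z, ω(x,y)=1, ω(x,z)=ω(y,z)=0. Then QDer(L₁) = GDer(L₁): every generalized derivation of L₁ is a quasiderivation of L₁. -/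
/-- `f` (as a matrix in the basis `x,y,z`) is a quasiderivation of `L₁`. -/
def IsQDer1 (f : Matrix (Fin 3) (Fin 3) ℂ) : Prop :=
  ∃ f' : Matrix (Fin 3) (Fin 3) ℂ, ∀ u v : Fin 3 → ℂ,
    br1 (f.mulVec u) v + br1 u (f.mulVec v) = f'.mulVec (br1 u v)

/-- `QDer(L₁) = GDer(L₁)`. -/
theorem stmt17 :
    ∀ f : Matrix (Fin 3) (Fin 3) ℂ, IsGDer1 f ↔ IsQDer1 f := by
  intro f
  constructor
  · rintro ⟨f₁, f₂, h⟩
    -- extract f 1 2 = 0 from (u,v) = (e₂, e₀), component 1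
    have h12 : f 1 2 = 0 := by
      have := congrFun (h ![0,0,1] ![1,0,0]) 1
      simpa [br1, Matrix.mulVec, dotProduct, Fin.sum_univ_three] using this
    -- extract f 1 0 = 0 from (u,v) = (e₀, e₂), component 2
    have h10 : f 1 0 = 0 := by
      have := congrFun (h ![1,0,0] ![0,0,1]) 2
      simpa [br1, Matrix.mulVec, dotProduct, Fin.sum_univ_three] using this
    refine ⟨![![0,0,0], ![0, f 0 0 + f 1 1, -(f 0 2)], ![0, -(f 2 0), f 1 1 + f 2 2]], ?_⟩
    intro u v
    funext i
    fin_cases i <;>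
      simp [br1, Matrix.mulVec, dotProduct, Fin.sum_univ_three, h10, h12] <;>
      ring
  · rintro ⟨f', h⟩
    exact ⟨f, f', fun u v => eq_sub_of_add_eq (h u v)⟩
end
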